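/- Let p be a continuously differentiable, everywhere positive probability density on ℝ^d satisfying p(x) ≤ C₁ exp(−C₂‖x‖²) and ‖∇ log p(x)‖ ≤ B + L‖x‖ for constants C₁, C₂, B, L > 0. Then for every t > 0 and every x ∈ ℝ^d, ∇ log p_t(x) = (1/α_t) ∫_{ℝ^d} ∇ log p(x₀) · q_t(x₀|x) dx₀, where q_t(x₀|x) := φ_t(x|x₀) p(x₀)/p_t(x) is the posterior density of x₀ given x_t = x. -/

import Mathlib

open MeasureTheory Real
open scoped BigOperators ENNReal

noncomputable section

/-- Euclidean space `ℝ^n`. -/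
abbrev Euc (n : ℕ) : Type := EuclideanSpace ℝ (Fin n)

/-- Membership in the unit cube `[0,1]^n`. -/
def inCube {n : ℕ} (w : Euc n) : Prop := ∀ i, w i ∈ Set.Icc (0 : ℝ) 1

/-- `α_t = e^{-t}`. -/
def ouAlpha (t : ℝ) : ℝ := Real.exp (-t)

/-- `σ_t² = 1 - e^{-2t}`. -/
def ouSigmaSq (t : ℝ) : ℝ := 1 - Real.exp (-2 * t)

/-- Gaussian transition density `φ_t(x'|x₀)` of the OU forward process. -/
def ouKernel (d : ℕ) (t : ℝ) (x' x₀ : Euc d) : ℝ :=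
  (2 * Real.pi * ouSigmaSq t) ^ (-(d : ℝ) / 2) *
    Real.exp (-‖x' - ouAlpha t • x₀‖ ^ 2 / (2 * ouSigmaSq t))

/-- Noised density `p_t(x') = ∫ φ_t(x'|x₀) p(x₀) dx₀`. -/
def noised (d : ℕ) (p : Euc d → ℝ) (t : ℝ) (x' : Euc d) : ℝ :=
  ∫ x₀, ouKernel d t x' x₀ * p x₀

/-- Score `∇ log p` of a density `p`. -/
def scoreOf (d : ℕ) (p : Euc d → ℝ) (x : Euc d) : Euc d :=
  gradient (fun z => Real.log (p z)) x

/-- Score `∇ log p_t` of the noised density. -/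
def noisedScore (d : ℕ) (p : Euc d → ℝ) (t : ℝ) (x : Euc d) : Euc d :=
  gradient (fun z => Real.log (noised d p t z)) x

/-- `∇_{x_t} log φ_t(x_t|x) = (α_t x - x_t)/σ_t²`. -/
def kernelScore (d : ℕ) (t : ℝ) (xt x : Euc d) : Euc d :=
  (ouSigmaSq t)⁻¹ • (ouAlpha t • x - xt)

/-!
The substitution `u = x - α_t x₀` writes `p_t` as `α_t^{-d} ∫ φ_t(u|0) p(α_t⁻¹ (x - u)) du`, a
convolution of an integrable Gaussian with a rescaled copy of `p`. The hypotheses make `p` and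
`∇p = p ∇log p` bounded (the Gaussian decay of `p` beats the linear growth of the score), so one
may differentiate under the integral sign; substituting back gives
`∇p_t(x) = α_t⁻¹ ∫ φ_t(x|x₀) ∇p(x₀) dx₀`, and dividing by `p_t(x) > 0` gives the formula.
-/

open InnerProductSpace Module

section Gradient

variable {E : Type*} [NormedAddCommGroup E] [InnerProductSpace ℝ E] [CompleteSpace E]
  {f : E → ℝ}

theorem HasGradientAt.log {g x : E} (hf : HasGradientAt f g x) (hx : f x ≠ 0) :
    HasGradientAt (fun z => Real.log (f z)) ((f x)⁻¹ • g) x := by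
  rw [hasGradientAt_iff_hasFDerivAt] at hf ⊢
  simpa using hf.log hx

theorem HasGradientAt.const_mul {g x : E} (c : ℝ) (hf : HasGradientAt f g x) :
    HasGradientAt (fun z => c * f z) (c • g) x := by
  rw [hasGradientAt_iff_hasFDerivAt] at hf ⊢
  simpa using hf.const_mul c

theorem HasGradientAt.comp_const_smul {g x : E} (a : ℝ) (hf : HasGradientAt f g (a • x)) :
    HasGradientAt (fun y => f (a • y)) (a • g) x := by
  rw [hasGradientAt_iff_hasFDerivAt] at hf ⊢
  refine (hf.comp x ((hasFDerivAt_id x).const_smul a)).congr_fderiv ?_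
  ext w
  simp

theorem ContDiff.continuous_gradient (hf : ContDiff ℝ 1 f) : Continuous (gradient f) :=
  (toDual ℝ E).symm.continuous.comp (hf.continuous_fderiv one_ne_zero)

end Gradient

theorem integrable_exp_neg_mul_sq_norm {V : Type*} [NormedAddCommGroup V] [InnerProductSpace ℝ V]
    [FiniteDimensional ℝ V] [MeasurableSpace V] [BorelSpace V] {b : ℝ} (hb : 0 < b) :
    Integrable (fun v : V => rexp (-b * ‖v‖ ^ 2)) :=
  .of_integral_ne_zero (by rw [GaussianFourier.integral_rexp_neg_mul_sq_norm hb]; positivity)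

theorem integral_comp_inv_smul_sub {E F : Type*} [NormedAddCommGroup E] [NormedSpace ℝ E]
    [MeasurableSpace E] [BorelSpace E] [FiniteDimensional ℝ E] [NormedAddCommGroup F]
    [NormedSpace ℝ F] (μ : Measure E) [μ.IsAddHaarMeasure] (H : E → F) {a : ℝ} (ha : 0 ≤ a)
    (x : E) :
    ∫ u, H (a⁻¹ • (x - u)) ∂μ = a ^ finrank ℝ E • ∫ y, H y ∂μ := by
  rw [integral_sub_left_eq_self (fun y => H (a⁻¹ • y)) μ x,
    Measure.integral_comp_inv_smul_of_nonneg μ H ha]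

section Convolution

variable {E : Type*} [NormedAddCommGroup E] [MeasurableSpace E] [BorelSpace E] {μ : Measure E}
  {g f : E → ℝ}

theorem integrable_mul_comp_sub {C : ℝ} (hg : Integrable g μ) (hf : Continuous f)
    (hfC : ∀ y, ‖f y‖ ≤ C) (x : E) : Integrable (fun u => g u * f (x - u)) μ :=
  hg.mul_bdd (hf.comp (continuous_const.sub continuous_id)).aestronglyMeasurable
    (ae_of_all _ fun _ => hfC _)

theorem hasGradientAt_integral_mul_comp_sub [InnerProductSpace ℝ E] [CompleteSpace E]
    [SecondCountableTopology E] {C M : ℝ} (hg : Integrable g μ)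
    (hf : Differentiable ℝ f) (hf' : Continuous (gradient f)) (hfC : ∀ y, ‖f y‖ ≤ C)
    (hf'M : ∀ y, ‖gradient f y‖ ≤ M) (x : E) :
    HasGradientAt (fun x => ∫ u, g u * f (x - u) ∂μ) (∫ u, g u • gradient f (x - u) ∂μ) x := by
  have hderiv : ∀ u x, HasFDerivAt (fun x => g u * f (x - u))
      (toDual ℝ E (g u • gradient f (x - u))) x := fun u x => by
    refine (((hf (x - u)).hasGradientAt.hasFDerivAt.comp x
      ((hasFDerivAt_id x).sub_const u)).const_mul (g u)).congr_fderiv ?_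
    ext w
    simp
  have hf'_meas : AEStronglyMeasurable (fun u => gradient f (x - u)) μ :=
    (hf'.comp (continuous_const.sub continuous_id)).aestronglyMeasurable
  have hmeas : AEStronglyMeasurable (fun u => g u • gradient f (x - u)) μ :=
    hg.aestronglyMeasurable.smul hf'_meas
  have hint : Integrable (fun u => g u • gradient f (x - u)) μ :=
    hg.smul_bdd M hf'_meas (ae_of_all _ fun _ => hf'M _)
  rw [hasGradientAt_iff_hasFDerivAt]
  have hcomm : ∫ u, toDual ℝ E (g u • gradient f (x - u)) ∂μ
      = toDual ℝ E (∫ u, g u • gradient f (x - u) ∂μ) :=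
    (toDual ℝ E).toLinearIsometry.toContinuousLinearMap.integral_comp_commSL (by simp) hint
  rw [← hcomm]
  exact hasFDerivAt_integral_of_dominated_of_fderiv_le (bound := fun u => ‖g u‖ * M)
    Filter.univ_mem
    (Filter.Eventually.of_forall fun x' =>
      (integrable_mul_comp_sub hg hf.continuous hfC x').aestronglyMeasurable)
    (integrable_mul_comp_sub hg hf.continuous hfC x)
    ((toDual ℝ E).continuous.comp_aestronglyMeasurable hmeas)
    (ae_of_all _ fun u x' _ => by
      rw [LinearIsometryEquiv.norm_map, norm_smul]
      exact mul_le_mul_of_nonneg_left (hf'M _) (norm_nonneg _))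
    (hg.norm.mul_const M) (ae_of_all _ fun u x' _ => hderiv u x')

end Convolution

theorem mul_exp_neg_mul_sq_le {a : ℝ} (ha : 0 < a) (r : ℝ) :
    r * rexp (-a * r ^ 2) ≤ 1 + a⁻¹ := by
  have hlin : r ≤ (1 + a⁻¹) * (1 + a * r ^ 2) := by
    have : a⁻¹ * (a * r ^ 2) = r ^ 2 := by field_simp
    nlinarith [sq_nonneg (r - 1), inv_pos.2 ha, mul_nonneg ha.le (sq_nonneg r)]
  have hexp : (1 + a * r ^ 2) * rexp (-a * r ^ 2) ≤ 1 := by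
    calc (1 + a * r ^ 2) * rexp (-a * r ^ 2)
        ≤ rexp (a * r ^ 2) * rexp (-a * r ^ 2) := by
          gcongr; linarith [add_one_le_exp (a * r ^ 2)]
      _ = 1 := by rw [← exp_add]; ring_nf; exact exp_zero
  calc r * rexp (-a * r ^ 2) ≤ (1 + a⁻¹) * (1 + a * r ^ 2) * rexp (-a * r ^ 2) := by gcongr
    _ ≤ 1 + a⁻¹ := by
      rw [mul_assoc]
      exact mul_le_of_le_one_right (by positivity) hexp

theorem gradient_eq_smul_scoreOf {d : ℕ} {p : Euc d → ℝ} {y : Euc d}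
    (hp : DifferentiableAt ℝ p y) (hy : p y ≠ 0) : gradient p y = p y • scoreOf d p y := by
  rw [scoreOf, (hp.hasGradientAt.log hy).gradient, smul_inv_smul₀ hy]

theorem norm_gradient_le_of_norm_scoreOf_le {d : ℕ} {p : Euc d → ℝ} {C₁ C₂ B L : ℝ}
    (hC₁ : 0 ≤ C₁) (hC₂ : 0 < C₂) (hB : 0 ≤ B) (hL : 0 ≤ L) (hp : Differentiable ℝ p)
    (hppos : ∀ x, 0 < p x) (hbound : ∀ x, p x ≤ C₁ * rexp (-C₂ * ‖x‖ ^ 2))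
    (hscore : ∀ x, ‖scoreOf d p x‖ ≤ B + L * ‖x‖) (y : Euc d) :
    ‖gradient p y‖ ≤ C₁ * (B + L * (1 + C₂⁻¹)) := by
  rw [gradient_eq_smul_scoreOf (hp y) (hppos y).ne', norm_smul, norm_of_nonneg (hppos y).le]
  have hexp : rexp (-C₂ * ‖y‖ ^ 2) ≤ 1 := exp_le_one_iff.2 (by nlinarith [sq_nonneg ‖y‖])
  calc p y * ‖scoreOf d p y‖ ≤ C₁ * rexp (-C₂ * ‖y‖ ^ 2) * (B + L * ‖y‖) :=
        mul_le_mul (hbound y) (hscore y) (norm_nonneg _) (by positivity)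
    _ = C₁ * (B * rexp (-C₂ * ‖y‖ ^ 2) + L * (‖y‖ * rexp (-C₂ * ‖y‖ ^ 2))) := by ring
    _ ≤ C₁ * (B + L * (1 + C₂⁻¹)) := by
      gcongr
      · exact mul_le_of_le_one_right hB hexp
      · exact mul_exp_neg_mul_sq_le hC₂ ‖y‖

theorem ouAlpha_pos (t : ℝ) : 0 < ouAlpha t := exp_pos _

theorem ouSigmaSq_pos {t : ℝ} (ht : 0 < t) : 0 < ouSigmaSq t := by
  rw [ouSigmaSq, sub_pos, exp_lt_one_iff]
  linarith

theorem ouKernel_eq_ouKernel_sub (d : ℕ) (t : ℝ) (x' x₀ : Euc d) :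
    ouKernel d t x' x₀ = ouKernel d t (x' - ouAlpha t • x₀) 0 := by
  simp [ouKernel]

theorem ouKernel_inv_smul_sub (d : ℕ) (t : ℝ) (x u : Euc d) :
    ouKernel d t x ((ouAlpha t)⁻¹ • (x - u)) = ouKernel d t u 0 := by
  rw [ouKernel_eq_ouKernel_sub, smul_inv_smul₀ (ouAlpha_pos t).ne', sub_sub_cancel]

theorem ouKernel_pos {t : ℝ} (ht : 0 < t) (d : ℕ) (x' x₀ : Euc d) : 0 < ouKernel d t x' x₀ :=
  mul_pos (rpow_pos_of_pos (by have := ouSigmaSq_pos ht; positivity) _) (exp_pos _)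

theorem continuous_ouKernel (d : ℕ) (t : ℝ) (x₀ : Euc d) :
    Continuous (fun x' => ouKernel d t x' x₀) := by
  unfold ouKernel
  fun_prop

theorem integrable_ouKernel {t : ℝ} (ht : 0 < t) (d : ℕ) (x₀ : Euc d) :
    Integrable (fun x' => ouKernel d t x' x₀) := by
  have hb : 0 < (2 * ouSigmaSq t)⁻¹ := by have := ouSigmaSq_pos ht; positivity
  refine (((integrable_exp_neg_mul_sq_norm hb).comp_sub_right (ouAlpha t • x₀)).const_mul
    ((2 * π * ouSigmaSq t) ^ (-(d : ℝ) / 2))).congr (ae_of_all _ fun x' => ?_)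
  simp only [ouKernel]
  ring_nf

theorem noised_eq_integral_mul_comp_sub (d : ℕ) (p : Euc d → ℝ) (t : ℝ) (x : Euc d) :
    noised d p t x
      = (ouAlpha t ^ d)⁻¹ * ∫ u, ouKernel d t u 0 * p ((ouAlpha t)⁻¹ • (x - u)) := by
  have h := integral_comp_inv_smul_sub volume (fun x₀ => ouKernel d t x x₀ * p x₀)
    (ouAlpha_pos t).le x
  simp only [ouKernel_inv_smul_sub, finrank_euclideanSpace_fin, smul_eq_mul] at h
  rw [h, inv_mul_cancel_left₀ (pow_pos (ouAlpha_pos t) d).ne', noised]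

theorem noised_pos {d : ℕ} {p : Euc d → ℝ} {t C : ℝ} (ht : 0 < t) (hp : Continuous p)
    (hpC : ∀ y, ‖p y‖ ≤ C) (hppos : ∀ y, 0 < p y) (x : Euc d) : 0 < noised d p t x := by
  have hpos : ∀ u, 0 < ouKernel d t u 0 * p ((ouAlpha t)⁻¹ • (x - u)) :=
    fun u => mul_pos (ouKernel_pos ht d u 0) (hppos _)
  rw [noised_eq_integral_mul_comp_sub]
  refine mul_pos (inv_pos.2 (pow_pos (ouAlpha_pos t) d)) ?_
  exact integral_pos_of_integrable_nonneg_nonzero (x := 0)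
    ((continuous_ouKernel d t 0).mul (by fun_prop))
    (integrable_mul_comp_sub (integrable_ouKernel ht d 0)
      (hp.comp (continuous_const_smul _)) (fun _ => hpC _) x)
    (fun u => (hpos u).le) (hpos 0).ne'

theorem hasGradientAt_noised {d : ℕ} {p : Euc d → ℝ} {t C M : ℝ} (ht : 0 < t)
    (hp : Differentiable ℝ p) (hp' : Continuous (gradient p)) (hpC : ∀ y, ‖p y‖ ≤ C)
    (hp'M : ∀ y, ‖gradient p y‖ ≤ M) (x : Euc d) :
    HasGradientAt (noised d p t) ((ouAlpha t)⁻¹ • ∫ x₀, ouKernel d t x x₀ • gradient p x₀) x := by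
  set α := ouAlpha t
  have hα := ouAlpha_pos t
  set f : Euc d → ℝ := fun y => p (α⁻¹ • y)
  have hf : ∀ y, HasGradientAt f (α⁻¹ • gradient p (α⁻¹ • y)) y :=
    fun y => (hp _).hasGradientAt.comp_const_smul α⁻¹
  have hgrad_f : gradient f = fun y => α⁻¹ • gradient p (α⁻¹ • y) := gradient_eq hf
  have hconv := hasGradientAt_integral_mul_comp_sub (μ := volume) (M := α⁻¹ * M)
    (integrable_ouKernel ht d 0) (fun y => (hf y).differentiableAt)
    (by rw [hgrad_f]; fun_prop) (fun _ => hpC _)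
    (fun y => by
      rw [hgrad_f, norm_smul, norm_inv, norm_of_nonneg hα.le]
      exact mul_le_mul_of_nonneg_left (hp'M _) (by positivity)) x
  have hchange := integral_comp_inv_smul_sub volume
    (fun x₀ => ouKernel d t x x₀ • α⁻¹ • gradient p x₀) hα.le x
  simp only [ouKernel_inv_smul_sub, finrank_euclideanSpace_fin] at hchange
  have hnoised : noised d p t = fun x => (α ^ d)⁻¹ * ∫ u, ouKernel d t u 0 * f (x - u) :=
    funext (noised_eq_integral_mul_comp_sub d p t)
  rw [hnoised]
  convert hconv.const_mul (α ^ d)⁻¹ using 1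
  simp_rw [hgrad_f]
  rw [hchange, inv_smul_smul₀ (pow_pos hα d).ne', ← integral_smul]
  simp_rw [smul_comm α⁻¹ (ouKernel d t x _)]

theorem stmt1_general (d : ℕ) (C₁ C₂ B L : ℝ) (hC₁ : 0 < C₁) (hC₂ : 0 < C₂) (hB : 0 < B) (hL : 0 < L)
    (p : Euc d → ℝ) (hp1 : ContDiff ℝ 1 p) (hppos : ∀ x, 0 < p x)
    (hbound : ∀ x, p x ≤ C₁ * Real.exp (-C₂ * ‖x‖ ^ 2))
    (hscore : ∀ x, ‖scoreOf d p x‖ ≤ B + L * ‖x‖) :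
    ∀ t : ℝ, 0 < t → ∀ x : Euc d,
      noisedScore d p t x
        = (ouAlpha t)⁻¹ •
            ∫ x₀, (ouKernel d t x x₀ * p x₀ / noised d p t x) • scoreOf d p x₀ := by
  intro t ht x
  have hp : Differentiable ℝ p := hp1.differentiable one_ne_zero
  have hpC : ∀ y, ‖p y‖ ≤ C₁ := fun y => by
    rw [norm_of_nonneg (hppos y).le]
    exact (hbound y).trans
      (mul_le_of_le_one_right hC₁.le (exp_le_one_iff.2 (by nlinarith [sq_nonneg ‖y‖])))
  have hp'M := norm_gradient_le_of_norm_scoreOf_le hC₁.le hC₂ hB.le hL.le hp hppos hbound hscore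
  have hpt := noised_pos ht hp1.continuous hpC hppos x
  have hposterior : ∀ x₀, (ouKernel d t x x₀ * p x₀ / noised d p t x) • scoreOf d p x₀
      = (noised d p t x)⁻¹ • ouKernel d t x x₀ • gradient p x₀ := fun x₀ => by
    rw [gradient_eq_smul_scoreOf (hp x₀) (hppos x₀).ne', smul_smul, smul_smul, div_eq_inv_mul,
      mul_assoc]
  rw [noisedScore,
    ((hasGradientAt_noised ht hp hp1.continuous_gradient hpC hp'M x).log hpt.ne').gradient]
  simp_rw [hposterior, integral_smul, smul_comm (noised d p t x)⁻¹]

/-- For a `C¹`, positive, sub-Gaussian probability density `p` on `ℝ^d` whose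
score grows at most linearly, the score of the noised density satisfies
`∇ log p_t(x) = (1/α_t) ∫ ∇ log p(x₀) q_t(x₀|x) dx₀`,
where `q_t(x₀|x) = φ_t(x|x₀) p(x₀) / p_t(x)` is the posterior density of `x₀` given `x_t = x`. -/
theorem stmt1 (d : ℕ) (C₁ C₂ B L : ℝ) (hC₁ : 0 < C₁) (hC₂ : 0 < C₂) (hB : 0 < B) (hL : 0 < L)
    (p : Euc d → ℝ) (hp1 : ContDiff ℝ 1 p) (hppos : ∀ x, 0 < p x)
    (hpint : (∫ x, p x) = 1)
    (hbound : ∀ x, p x ≤ C₁ * Real.exp (-C₂ * ‖x‖ ^ 2))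
    (hscore : ∀ x, ‖scoreOf d p x‖ ≤ B + L * ‖x‖) :
    ∀ t : ℝ, 0 < t → ∀ x : Euc d,
      noisedScore d p t x
        = (ouAlpha t)⁻¹ •
            ∫ x₀, (ouKernel d t x x₀ * p x₀ / noised d p t x) • scoreOf d p x₀ :=
  stmt1_general d C₁ C₂ B L hC₁ hC₂ hB hL p hp1 hppos hbound hscore
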